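/- (Corollary 4.4, equality of correlation functions under the lifting.) Let G=(V,E) be a finite subgraph of Z^d, β>0, Δ∈ℝ, and let J be the coupling constants on ℓ(G) with J_{uv}=β/4 for uv∈E₁ and J_{uv}=(Δ+log 2)/2 for uv∈E₂. For any non-empty set A ⊂ V, any choice of indices i_x ∈ {0,1} for x ∈ A, and any boundary condition ξ ∈ {-1,0,1}^{Z^d}: ⟨∏_{x∈A} σ_x⟩^ξ_{G,β,Δ} = ⟨∏_{x∈A} τ_{(x,i_x)}⟩^{Ising,ℓ(ξ)}_{ℓ(G),J}. -/

import Mathlib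

open Filter Topology

namespace BCIsing

abbrev Vtx (d : ℕ) := Fin d → ℤ

/-- Nearest-neighbour adjacency on `ℤ^d` (ℓ¹-distance one). -/
def adj {d : ℕ} (x y : Vtx d) : Prop := (∑ i, (x i - y i).natAbs) = 1

instance {d : ℕ} (x : Vtx d) : DecidablePred (adj x) := fun y => by
  unfold adj; infer_instance

/-- The finite set of lattice neighbours of `x`. -/
noncomputable def nbrs {d : ℕ} (x : Vtx d) : Finset (Vtx d) :=
  (Fintype.piFinset fun i => Finset.Icc (x i - 1) (x i + 1)).filter (adj x)

/-- Spins: `0, 1, 2 : Fin 3` encode the values `-1, 0, +1`. -/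
abbrev Spin := Fin 3

/-- The real value of a spin. -/
def sval (s : Spin) : ℝ := ((s : ℕ) : ℝ) - 1

/-- The box `[-n,n]^d ∩ ℤ^d`. -/
noncomputable def box (d n : ℕ) : Finset (Vtx d) :=
  Fintype.piFinset fun _ => Finset.Icc (-(n : ℤ)) n

/-- Extension of `f` on `Λ` by the boundary condition `η` outside of `Λ`. -/
def ext {d : ℕ} (Λ : Finset (Vtx d)) (η : Vtx d → Spin) (f : ↥Λ → Spin) : Vtx d → Spin :=
  fun x => if h : x ∈ Λ then f ⟨x, h⟩ else η x

/-- Blume–Capel Boltzmann weight of the configuration `f` in volume `Λ` with boundary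
condition `η`:  `exp(β Σ_{xy∈E(Λ)} σ_x σ_y + Δ Σ_{x∈Λ} σ_x² + β Σ_{x∈Λ,y∉Λ,x∼y} σ_x η_y)`
(every interior edge is counted once, whence the factor `β/2` in the double sum). -/
noncomputable def wt {d : ℕ} (Λ : Finset (Vtx d)) (β Δ : ℝ) (η : Vtx d → Spin)
    (f : ↥Λ → Spin) : ℝ :=
  Real.exp (β / 2 * ∑ x ∈ Λ, ∑ y ∈ nbrs x ∩ Λ, sval (ext Λ η f x) * sval (ext Λ η f y)
    + Δ * ∑ x ∈ Λ, sval (ext Λ η f x) ^ 2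
    + β * ∑ x ∈ Λ, ∑ y ∈ nbrs x \ Λ, sval (ext Λ η f x) * sval (η y))

/-- Finite-volume Blume–Capel expectation of the observable `g` in volume `Λ`
with boundary condition `η`. -/
noncomputable def finExp {d : ℕ} (Λ : Finset (Vtx d)) (β Δ : ℝ) (η : Vtx d → Spin)
    (g : (Vtx d → Spin) → ℝ) : ℝ :=
  (∑ f : ↥Λ → Spin, g (ext Λ η f) * wt Λ β Δ η f) / ∑ f : ↥Λ → Spin, wt Λ β Δ η f

/-- The plus boundary condition `η ≡ +1`. -/
def plusBC {d : ℕ} : Vtx d → Spin := fun _ => 2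

/-- The free (zero) boundary condition `η ≡ 0`. -/
def freeBC {d : ℕ} : Vtx d → Spin := fun _ => 1

/-- A local observable: one depending on finitely many spins. -/
def IsLocal {d : ℕ} (g : (Vtx d → Spin) → ℝ) : Prop :=
  ∃ S : Finset (Vtx d), ∀ σ σ' : Vtx d → Spin, (∀ x ∈ S, σ x = σ' x) → g σ = g σ'

/-- `E` is the infinite-volume plus-state expectation functional `⟨·⟩⁺_{β,Δ}`:
the weak limit, as `Λ ↑ ℤ^d`, of finite-volume plus-boundary-condition expectations. -/
def IsPlusState {d : ℕ} (E : ℝ → ℝ → ((Vtx d → Spin) → ℝ) → ℝ) : Prop :=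
  ∀ β Δ : ℝ, 0 < β → ∀ g : (Vtx d → Spin) → ℝ, IsLocal g →
    Tendsto (fun n => finExp (box d n) β Δ plusBC g) atTop (nhds (E β Δ g))

/-- The spin at the origin, `σ₀`. -/
noncomputable def spin0 {d : ℕ} : (Vtx d → Spin) → ℝ := fun σ => sval (σ 0)

/-- The critical inverse temperature `β_c(Δ) = inf{β>0 : ⟨σ₀⟩⁺_{β,Δ} > 0}`. -/
noncomputable def betaC {d : ℕ} (E : ℝ → ℝ → ((Vtx d → Spin) → ℝ) → ℝ) (Δ : ℝ) : ℝ :=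
  sInf {β : ℝ | 0 < β ∧ 0 < E β Δ (spin0 (d := d))}

/-- The sup-norm `‖x‖_∞` of a lattice point, as a real number. -/
noncomputable def normInf {d : ℕ} (x : Vtx d) : ℝ :=
  ((Finset.univ.sup fun i => (x i).natAbs : ℕ) : ℝ)


abbrev Edge (d : ℕ) := Sym2 (Vtx d)

/-- `e` is an edge of the subgraph of `ℤ^d` induced on `V`: its endpoints are adjacent
lattice points, both belonging to `V`. -/
def IsSubgraphEdge {d : ℕ} (V : Finset (Vtx d)) (e : Edge d) : Prop :=
  ∃ x y : Vtx d, x ∈ V ∧ y ∈ V ∧ adj x y ∧ e = s(x, y)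

/-- The real spin configuration determined by `f` on `V` and `ξ` off `V`. -/
noncomputable def sOf {d : ℕ} (V : Finset (Vtx d)) (ξ : Vtx d → Spin)
    (f : ↥V → Spin) : Vtx d → ℝ :=
  fun x => if h : x ∈ V then sval (f ⟨x, h⟩) else sval (ξ x)

/-- Blume–Capel Boltzmann weight on the subgraph `G = (V,E)` of `ℤ^d` with boundary
condition `ξ`:  `exp(β Σ_{xy∈E} σ_x σ_y + Δ Σ_{x∈V} σ_x² + β Σ_{xy∈E^d,x∈V,y∉V} σ_x ξ_y)`. -/
noncomputable def bcW {d : ℕ} (V : Finset (Vtx d)) (E : Finset (Edge d)) (β Δ : ℝ)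
    (ξ : Vtx d → Spin) (f : ↥V → Spin) : ℝ :=
  Real.exp (β * ∑ e ∈ E,
      Sym2.lift ⟨fun x y => sOf V ξ f x * sOf V ξ f y, fun _ _ => mul_comm _ _⟩ e
    + Δ * ∑ x ∈ V, sOf V ξ f x ^ 2
    + β * ∑ x ∈ V, ∑ y ∈ nbrs x \ V, sOf V ξ f x * sval (ξ y))

/-- The `±1` value of an Ising spin. -/
def pm (b : Bool) : ℝ := if b then 1 else -1

/-- The real values of the lifted Ising configuration `τ` on `ℓ(V) = V × {0,1}`
(extended by `0` off `V`, which is immaterial). -/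
noncomputable def tOf {d : ℕ} (V : Finset (Vtx d)) (τ : ↥V × Bool → Bool) :
    Vtx d → Bool → ℝ :=
  fun x i => if h : x ∈ V then pm (τ (⟨x, h⟩, i)) else 0

/-- Ising Boltzmann weight on the lifted graph `ℓ(G)` with coupling constants
`J = β/4` on the edges of `E₁` and `J = (Δ + log 2)/2` on the edges of `E₂`, with
boundary condition `ℓ(ξ)`:
`exp(Σ_{uv∈E₁} (β/4) τ_u τ_v + Σ_{uv∈E₂} ((Δ+log2)/2) τ_u τ_v
   + Σ (β/4) τ_u ℓ(ξ)_v)`,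
where for a lattice edge `xy ∈ E` the four `E₁`-edges `{(x,i),(y,j)}` contribute
`Σ_{i,j∈{0,1}} τ_{(x,i)} τ_{(y,j)}`, and similarly for the boundary edges. -/
noncomputable def isingW {d : ℕ} (V : Finset (Vtx d)) (E : Finset (Edge d)) (β Δ : ℝ)
    (ξ : Vtx d → Spin) (τ : ↥V × Bool → Bool) : ℝ :=
  Real.exp (β / 4 * ∑ e ∈ E,
      Sym2.lift ⟨fun x y => ∑ i : Bool, ∑ j : Bool, tOf V τ x i * tOf V τ y j,
        fun x y => by
          show (∑ i : Bool, ∑ j : Bool, tOf V τ x i * tOf V τ y j)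
              = ∑ i : Bool, ∑ j : Bool, tOf V τ y i * tOf V τ x j
          rw [Finset.sum_comm]
          exact Finset.sum_congr rfl fun i _ =>
            Finset.sum_congr rfl fun j _ => mul_comm _ _⟩ e
    + (Δ + Real.log 2) / 2 * ∑ x ∈ V, tOf V τ x false * tOf V τ x true
    + β / 4 * ∑ x ∈ V, ∑ y ∈ nbrs x \ V,
        ∑ i : Bool, ∑ j : Bool, tOf V τ x i * sval (ξ y))



/-! ### Auxiliary machinery for the lifting -/

/-- Component selector: `comp i b` is the `i`-th component of the pair `b`. -/
def comp (i : Bool) (b : Bool × Bool) : Bool := cond i b.2 b.1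

/-- Projection of a pair of Ising spins to a Blume–Capel spin. -/
def proj (b : Bool × Bool) : Spin := (cond b.1 1 0) + (cond b.2 1 0)

lemma sval_proj (b : Bool × Bool) : sval (proj b) = (pm b.1 + pm b.2) / 2 := by
  rcases b with ⟨b1, b2⟩ <;> cases b1 <;> cases b2 <;> norm_num [sval, proj, pm, show ((1 + 1 : Fin 3) : ℕ) = 2 from rfl,
    show ((2 : Fin 3) : ℕ) = 2 from rfl]

lemma pm_mul_pm (b : Bool × Bool) : pm b.1 * pm b.2 = 2 * sval (proj b) ^ 2 - 1 := by
  rcases b with ⟨b1, b2⟩ <;> cases b1 <;> cases b2 <;> norm_num [sval, proj, pm, show ((1 + 1 : Fin 3) : ℕ) = 2 from rfl,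
    show ((2 : Fin 3) : ℕ) = 2 from rfl]

/-- The multiplicity factor `2^{σ²}`. -/
noncomputable def mfac (s : Spin) : ℝ := if s = 1 then 1 else 2

lemma mfac_eq (s : Spin) : mfac s = Real.exp (Real.log 2 * sval s ^ 2) := by
  fin_cases s <;> simp [mfac, sval] <;> norm_num [Real.exp_log]

/-- The fibre of `proj` over `s`. -/
def fib (s : Spin) : Finset (Bool × Bool) := Finset.univ.filter (fun b => proj b = s)

lemma fib0 : fib 0 = {(false, false)} := by decide
lemma fib1 : fib 1 = {(false, true), (true, false)} := by decide
lemma fib2 : fib 2 = {(true, true)} := by decide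

lemma site_sum_pm (s : Spin) (i : Bool) :
    mfac s * ∑ b ∈ fib s, pm (comp i b) = 2 * sval s := by
  fin_cases s <;> cases i <;>
    simp [fib0, fib1, fib2, mfac, sval, pm, comp] <;> norm_num

lemma site_sum_one (s : Spin) :
    mfac s * ∑ b ∈ fib s, (1 : ℝ) = 2 := by
  fin_cases s <;> simp [fib0, fib1, fib2, mfac] <;> norm_num

lemma site_sum (s : Spin) (c : Prop) [Decidable c] (i : Bool) :
    mfac s * ∑ b ∈ fib s, (if c then pm (comp i b) else 1)
      = 2 * (if c then sval s else 1) := by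
  by_cases h : c
  · simp only [if_pos h]; exact site_sum_pm s i
  · simp only [if_neg h]; rw [mul_one]; exact site_sum_one s

/-- The natural bijection `(α × Bool → Bool) ≃ (α → Bool × Bool)`. -/
def liftEquiv (α : Type*) : (α × Bool → Bool) ≃ (α → Bool × Bool) where
  toFun τ x := (τ (x, false), τ (x, true))
  invFun g p := comp p.2 (g p.1)
  left_inv τ := funext fun p => by rcases p with ⟨x, i⟩; cases i <;> rfl
  right_inv g := funext fun x => rfl

lemma prod_attach_subset {d : ℕ} {V A : Finset (Vtx d)} (hAV : A ⊆ V)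
    (F : ↥V → ℝ) (G : Vtx d → ℝ)
    (hFG : ∀ (x : Vtx d) (hx : x ∈ V), x ∈ A → G x = F ⟨x, hx⟩) :
    ∏ x ∈ A, G x
      = ∏ x ∈ Finset.univ.filter (fun x : ↥V => (x : Vtx d) ∈ A), F x := by
  refine Finset.prod_bij (fun x hx => (⟨x, hAV hx⟩ : ↥V)) ?_ ?_ ?_ ?_
  · intro a ha; simp [ha]
  · intro a₁ h₁ a₂ h₂ h; simpa using congrArg Subtype.val h
  · intro b hb
    refine ⟨(b : Vtx d), by simpa using hb, ?_⟩
    exact Subtype.ext rfl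
  · intro a ha; exact hFG a (hAV ha) ha

lemma isingW_eq_bcW {d : ℕ} (V : Finset (Vtx d)) (E : Finset (Edge d))
    (hE : ∀ e ∈ E, IsSubgraphEdge V e) (β Δ : ℝ) (ξ : Vtx d → Spin)
    (τ : ↥V × Bool → Bool) :
    isingW V E β Δ ξ τ
      = bcW V E β Δ ξ (fun x => proj (τ (x, false), τ (x, true)))
          * (Real.exp (-((Δ + Real.log 2) / 2))) ^ V.card
          * ∏ x : ↥V, mfac (proj (τ (x, false), τ (x, true))) := by
  set f : ↥V → Spin := fun x => proj (τ (x, false), τ (x, true)) with hf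
  have hsOf : ∀ (x : Vtx d) (hx : x ∈ V), sOf V ξ f x = sval (f ⟨x, hx⟩) :=
    fun x hx => dif_pos hx
  have htOf : ∀ (x : Vtx d) (hx : x ∈ V) (i : Bool),
      tOf V τ x i = pm (τ (⟨x, hx⟩, i)) := fun x hx i => dif_pos hx
  rw [isingW, bcW]
  have hm : ∀ x : ↥V, mfac (f x) = Real.exp (Real.log 2 * sval (f x) ^ 2) :=
    fun x => mfac_eq _
  calc Real.exp (β / 4 * ∑ e ∈ E,
          Sym2.lift ⟨fun x y => ∑ i : Bool, ∑ j : Bool, tOf V τ x i * tOf V τ y j,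
            fun x y => by
              show (∑ i : Bool, ∑ j : Bool, tOf V τ x i * tOf V τ y j)
                  = ∑ i : Bool, ∑ j : Bool, tOf V τ y i * tOf V τ x j
              rw [Finset.sum_comm]
              exact Finset.sum_congr rfl fun i _ =>
                Finset.sum_congr rfl fun j _ => mul_comm _ _⟩ e
        + (Δ + Real.log 2) / 2 * ∑ x ∈ V, tOf V τ x false * tOf V τ x true
        + β / 4 * ∑ x ∈ V, ∑ y ∈ nbrs x \ V,
            ∑ i : Bool, ∑ j : Bool, tOf V τ x i * sval (ξ y))
      = Real.exp ((β * ∑ e ∈ E,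
          Sym2.lift ⟨fun x y => sOf V ξ f x * sOf V ξ f y, fun _ _ => mul_comm _ _⟩ e
        + Δ * ∑ x ∈ V, sOf V ξ f x ^ 2
        + β * ∑ x ∈ V, ∑ y ∈ nbrs x \ V, sOf V ξ f x * sval (ξ y))
        + (V.card : ℝ) * (-((Δ + Real.log 2) / 2))
        + ∑ x : ↥V, Real.log 2 * sval (f x) ^ 2) := by
        congr 1
        have h1 : ∑ e ∈ E,
            Sym2.lift ⟨fun x y => ∑ i : Bool, ∑ j : Bool, tOf V τ x i * tOf V τ y j,
              fun x y => by
                show (∑ i : Bool, ∑ j : Bool, tOf V τ x i * tOf V τ y j)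
                    = ∑ i : Bool, ∑ j : Bool, tOf V τ y i * tOf V τ x j
                rw [Finset.sum_comm]
                exact Finset.sum_congr rfl fun i _ =>
                  Finset.sum_congr rfl fun j _ => mul_comm _ _⟩ e
            = 4 * ∑ e ∈ E,
              Sym2.lift ⟨fun x y => sOf V ξ f x * sOf V ξ f y,
                fun _ _ => mul_comm _ _⟩ e := by
          rw [Finset.mul_sum]
          refine Finset.sum_congr rfl fun e he => ?_
          obtain ⟨x, y, hx, hy, -, rfl⟩ := hE e he
          simp only [Sym2.lift_mk, Fintype.sum_bool]
          rw [htOf x hx, htOf x hx, htOf y hy, htOf y hy, hsOf x hx, hsOf y hy,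
            hf]
          simp only [sval_proj]
          ring
        have h2 : ∑ x ∈ V, tOf V τ x false * tOf V τ x true
            = 2 * (∑ x ∈ V, sOf V ξ f x ^ 2) - V.card := by
          have : ∑ x ∈ V, tOf V τ x false * tOf V τ x true
              = ∑ x ∈ V, (2 * sOf V ξ f x ^ 2 - 1) := by
            refine Finset.sum_congr rfl fun x hx => ?_
            rw [htOf x hx, htOf x hx, hsOf x hx]
            exact pm_mul_pm (τ (⟨x, hx⟩, false), τ (⟨x, hx⟩, true))
          rw [this, Finset.sum_sub_distrib, Finset.sum_const, ← Finset.mul_sum]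
          simp
        have h3 : ∑ x ∈ V, ∑ y ∈ nbrs x \ V,
              ∑ i : Bool, ∑ j : Bool, tOf V τ x i * sval (ξ y)
            = 4 * ∑ x ∈ V, ∑ y ∈ nbrs x \ V, sOf V ξ f x * sval (ξ y) := by
          rw [Finset.mul_sum]
          refine Finset.sum_congr rfl fun x hx => ?_
          rw [Finset.mul_sum]
          refine Finset.sum_congr rfl fun y _ => ?_
          simp only [Fintype.sum_bool]
          rw [htOf x hx, htOf x hx, hsOf x hx, hf]
          simp only [sval_proj]
          ring
        have h4 : ∑ x : ↥V, Real.log 2 * sval (f x) ^ 2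
            = Real.log 2 * ∑ x ∈ V, sOf V ξ f x ^ 2 := by
          rw [Finset.mul_sum, ← Finset.sum_coe_sort V
            (fun x => Real.log 2 * sOf V ξ f x ^ 2)]
          exact Finset.sum_congr rfl fun x _ => by rw [hsOf x x.2]
        rw [h1, h2, h3, h4]
        ring
    _ = _ := by
        rw [Real.exp_add, Real.exp_add, Real.exp_nat_mul, Real.exp_sum]
        congr 1
        exact Finset.prod_congr rfl fun x _ => (hm x).symm

lemma key_sum {d : ℕ} (V : Finset (Vtx d)) (E : Finset (Edge d))
    (hE : ∀ e ∈ E, IsSubgraphEdge V e) (β Δ : ℝ) (ξ : Vtx d → Spin)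
    (A : Finset (Vtx d)) (hAV : A ⊆ V) (ix : Vtx d → Bool) :
    ∑ τ : ↥V × Bool → Bool, (∏ x ∈ A, tOf V τ x (ix x)) * isingW V E β Δ ξ τ
      = (2 * Real.exp (-((Δ + Real.log 2) / 2))) ^ V.card
          * ∑ f : ↥V → Spin, (∏ x ∈ A, sOf V ξ f x) * bcW V E β Δ ξ f := by
  classical
  set K : ℝ := Real.exp (-((Δ + Real.log 2) / 2)) with hK
  -- Step 1: rewrite each Ising summand
  have step1 : ∀ τ : ↥V × Bool → Bool,
      (∏ x ∈ A, tOf V τ x (ix x)) * isingW V E β Δ ξ τ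
        = (∏ x ∈ Finset.univ.filter (fun x : ↥V => (x : Vtx d) ∈ A),
              pm (τ (x, ix ↑x)))
          * (bcW V E β Δ ξ (fun x => proj (τ (x, false), τ (x, true)))
              * K ^ V.card
              * ∏ x : ↥V, mfac (proj (τ (x, false), τ (x, true)))) := by
    intro τ
    rw [isingW_eq_bcW V E hE β Δ ξ τ]
    congr 1
    exact prod_attach_subset hAV (fun x => pm (τ (x, ix ↑x)))
      (fun x => tOf V τ x (ix x)) (fun x hx _ => dif_pos hx)
  simp only [step1]
  -- Step 2: change variables via the lifting bijection
  rw [← Equiv.sum_comp (liftEquiv ↥V).symm]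
  have step2 : ∀ g : ↥V → Bool × Bool,
      (∏ x ∈ Finset.univ.filter (fun x : ↥V => (x : Vtx d) ∈ A),
          pm ((liftEquiv ↥V).symm g (x, ix ↑x)))
        * (bcW V E β Δ ξ (fun x => proj ((liftEquiv ↥V).symm g (x, false),
              (liftEquiv ↥V).symm g (x, true)))
            * K ^ V.card
            * ∏ x : ↥V, mfac (proj ((liftEquiv ↥V).symm g (x, false),
                (liftEquiv ↥V).symm g (x, true))))
        = (∏ x ∈ Finset.univ.filter (fun x : ↥V => (x : Vtx d) ∈ A),
              pm (comp (ix ↑x) (g x)))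
          * (bcW V E β Δ ξ (fun x => proj (g x)) * K ^ V.card
              * ∏ x : ↥V, mfac (proj (g x))) := fun g => rfl
  simp only [step2]
  -- Step 3: fibre decomposition over the projected configuration
  rw [← Finset.sum_fiberwise Finset.univ
    (fun g : ↥V → Bool × Bool => (fun x => proj (g x)) : _ → (↥V → Spin))]
  have hfib : ∀ f : ↥V → Spin,
      Finset.univ.filter
          (fun g : ↥V → Bool × Bool => (fun x => proj (g x)) = f)
        = Fintype.piFinset (fun x => fib (f x)) := by
    intro f
    ext g
    simp [Fintype.mem_piFinset, fib, funext_iff]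
  rw [Finset.mul_sum]
  refine Finset.sum_congr rfl fun f _ => ?_
  rw [hfib f]
  -- Step 4: on the fibre over `f`, the weight is constant
  have step4 : ∀ g ∈ Fintype.piFinset (fun x => fib (f x)),
      (∏ x ∈ Finset.univ.filter (fun x : ↥V => (x : Vtx d) ∈ A),
          pm (comp (ix ↑x) (g x)))
        * (bcW V E β Δ ξ (fun x => proj (g x)) * K ^ V.card
            * ∏ x : ↥V, mfac (proj (g x)))
        = (∏ x : ↥V, if (x : Vtx d) ∈ A then pm (comp (ix ↑x) (g x)) else 1)
          * (bcW V E β Δ ξ f * K ^ V.card * ∏ x : ↥V, mfac (f x)) := by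
    intro g hg
    have hproj : ∀ x : ↥V, proj (g x) = f x := by
      intro x
      have := (Fintype.mem_piFinset.mp hg) x
      simpa [fib] using this
    simp only [hproj, Finset.prod_filter]
  rw [Finset.sum_congr rfl step4, ← Finset.sum_mul,
    ← Finset.prod_univ_sum (fun x : ↥V => fib (f x))
      (fun x b => if (↑x : Vtx d) ∈ A then pm (comp (ix ↑x) b) else 1)]
  -- Step 5: evaluate the per-site sums
  have step5 : (∏ x : ↥V, ∑ b ∈ fib (f x),
        (if (x : Vtx d) ∈ A then pm (comp (ix ↑x) b) else 1))
        * (bcW V E β Δ ξ f * K ^ V.card * ∏ x : ↥V, mfac (f x))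
      = (2 * K) ^ V.card * ((∏ x ∈ A, sOf V ξ f x) * bcW V E β Δ ξ f) := by
    have hcomb : (∏ x : ↥V, mfac (f x)) * ∏ x : ↥V, ∑ b ∈ fib (f x),
          (if (x : Vtx d) ∈ A then pm (comp (ix ↑x) b) else 1)
        = ∏ x : ↥V, (2 * (if (x : Vtx d) ∈ A then sval (f x) else 1)) := by
      rw [← Finset.prod_mul_distrib]
      exact Finset.prod_congr rfl fun x _ => site_sum (f x) _ (ix ↑x)
    have hsplit : ∏ x : ↥V, (2 * (if (x : Vtx d) ∈ A then sval (f x) else 1))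
        = 2 ^ V.card * ∏ x : ↥V, (if (x : Vtx d) ∈ A then sval (f x) else 1) := by
      rw [Finset.prod_mul_distrib, Finset.prod_const, Finset.card_univ, Fintype.card_coe]
    have hback : (∏ x : ↥V, if (x : Vtx d) ∈ A then sval (f x) else 1)
        = ∏ x ∈ A, sOf V ξ f x := by
      rw [← Finset.prod_filter]
      exact (prod_attach_subset hAV (fun x => sval (f x)) (sOf V ξ f)
        (fun x hx _ => dif_pos hx)).symm
    calc (∏ x : ↥V, ∑ b ∈ fib (f x),
          (if (x : Vtx d) ∈ A then pm (comp (ix ↑x) b) else 1))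
          * (bcW V E β Δ ξ f * K ^ V.card * ∏ x : ↥V, mfac (f x))
        = ((∏ x : ↥V, mfac (f x)) * ∏ x : ↥V, ∑ b ∈ fib (f x),
            (if (x : Vtx d) ∈ A then pm (comp (ix ↑x) b) else 1))
            * (bcW V E β Δ ξ f * K ^ V.card) := by ring
      _ = (2 ^ V.card * ∏ x ∈ A, sOf V ξ f x) * (bcW V E β Δ ξ f * K ^ V.card) := by
            rw [hcomb, hsplit, hback]
      _ = (2 * K) ^ V.card * ((∏ x ∈ A, sOf V ξ f x) * bcW V E β Δ ξ f) := by
            rw [mul_pow]; ring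
  exact step5


/-- **Corollary 4.4** (Equality of correlation functions under the lifting).
Let `G = (V,E)` be a finite subgraph of `ℤ^d`, `β > 0`, `Δ ∈ ℝ`, and let `J` be the
coupling constants on `ℓ(G)` with `J = β/4` on `E₁` and `J = (Δ+log 2)/2` on `E₂`.
For any non-empty `A ⊆ V`, any indices `i_x ∈ {0,1}` for `x ∈ A`, and any boundary
condition `ξ ∈ {-1,0,1}^{ℤ^d}`:
`⟨∏_{x∈A} σ_x⟩^ξ_{G,β,Δ} = ⟨∏_{x∈A} τ_{(x,i_x)}⟩^{Ising,ℓ(ξ)}_{ℓ(G),J}`. -/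
theorem lifted_correlations_equal (d : ℕ) (V : Finset (Vtx d)) (E : Finset (Edge d))
    (hE : ∀ e ∈ E, IsSubgraphEdge V e) (β Δ : ℝ) (hβ : 0 < β)
    (ξ : Vtx d → Spin) (A : Finset (Vtx d)) (hA : A.Nonempty) (hAV : A ⊆ V)
    (ix : Vtx d → Bool) :
    (∑ f : ↥V → Spin, (∏ x ∈ A, sOf V ξ f x) * bcW V E β Δ ξ f)
        / (∑ f : ↥V → Spin, bcW V E β Δ ξ f)
      = (∑ τ : ↥V × Bool → Bool, (∏ x ∈ A, tOf V τ x (ix x)) * isingW V E β Δ ξ τ)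
        / ∑ τ : ↥V × Bool → Bool, isingW V E β Δ ξ τ := by
  classical
  have hnum := key_sum V E hE β Δ ξ A hAV ix
  have hden := key_sum V E hE β Δ ξ ∅ (Finset.empty_subset V) ix
  simp only [Finset.prod_empty, one_mul] at hden
  have hC : ((2 : ℝ) * Real.exp (-((Δ + Real.log 2) / 2))) ^ V.card ≠ 0 :=
    pow_ne_zero _ (by positivity)
  rw [hnum, hden, mul_div_mul_left _ _ hC]


end BCIsing
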